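/- arXiv:2105.10928 — 2 statements merged into one kernel-verified Lean document; each statement's English description precedes it below -/
import Mathlib

section
/- Suppose the constants g^{kij} satisfy the standard null condition. Then there is a constant C > 0 depending only on g^{kij} such that for any twice continuously differentiable functions f, h of (t,x) ∈ (0,∞) × (ℝ² \ {0}), pointwise |g^{kij} ∂_k f ∂_{ij} h| ≤ C ( |T f| |∂² h| + |∂ f| |T ∂ h| ), where |∂²h| denotes the Euclidean norm of the collection of all second derivatives ∂_a∂_b h (a,b ∈ {0,1,2}), |Tf|² = |T_1 f|² + |T_2 f|², and |T∂h|² = Σ_{i=1,2} Σ_{a=0,1,2} |T_i ∂_a h|². -/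
open MeasureTheory Real

noncomputable section

/-- Spacetime ℝ_t × ℝ²_x; coordinate 0 is time, coordinates 1, 2 are space. -/
abbrev Spt := Fin 3 → ℝ
/-- Space ℝ². -/
abbrev Sp := Fin 2 → ℝ

/-- Partial derivative ∂_i on spacetime (∂_0 = ∂_t). -/
def pd (i : Fin 3) (u : Spt → ℝ) : Spt → ℝ :=
  fun y => fderiv ℝ u y (Pi.single i 1)

/-- Spatial partial derivative ∂_i on ℝ² (index 0 ↔ x₁, index 1 ↔ x₂). -/
def spd (i : Fin 2) (f : Sp → ℝ) : Sp → ℝ :=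
  fun x => fderiv ℝ f x (Pi.single i 1)

/-- The wave operator □ = ∂_tt − Δ. -/
def Box (u : Spt → ℝ) : Spt → ℝ :=
  fun y => pd 0 (pd 0 u) y - pd 1 (pd 1 u) y - pd 2 (pd 2 u) y

/-- r = |x|, the spatial Euclidean norm of a spacetime point. -/
def rad (y : Spt) : ℝ := Real.sqrt ((y 1) ^ 2 + (y 2) ^ 2)

/-- The Euclidean norm on ℝ². -/
def nrm2 (x : Sp) : ℝ := Real.sqrt ((x 0) ^ 2 + (x 1) ^ 2)

/-- ω₀ = −1, ω_i = x_i / |x| for i = 1, 2. -/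
def om (i : Fin 3) (y : Spt) : ℝ := if i = 0 then -1 else y i / rad y

/-- The good derivatives T_i = ω_i ∂_t + ∂_i (note T_0 = 0). -/
def Td (i : Fin 3) (u : Spt → ℝ) : Spt → ℝ :=
  fun y => om i y * pd 0 u y + pd i u y

/-- The vector fields Γ = (∂_t, ∂_1, ∂_2, ∂_θ, L₀) (no Lorentz boosts). -/
def Gam : Fin 5 → (Spt → ℝ) → Spt → ℝ :=
  ![pd 0, pd 1, pd 2,
    fun u y => y 1 * pd 2 u y - y 2 * pd 1 u y,
    fun u y => y 0 * pd 0 u y + y 1 * pd 1 u y + y 2 * pd 2 u y]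

/-- Γ^α = Γ₁^{α₁} ∘ Γ₂^{α₂} ∘ Γ₃^{α₃} ∘ Γ₄^{α₄} ∘ Γ₅^{α₅}. -/
def GamPow (α : Fin 5 → ℕ) (u : Spt → ℝ) : Spt → ℝ :=
  (Gam 0)^[α 0] <| (Gam 1)^[α 1] <| (Gam 2)^[α 2] <| (Gam 3)^[α 3] <| (Gam 4)^[α 4] u

/-- The multi-indices α with |α| ≤ k. -/
def midx (k : ℕ) : Finset (Fin 5 → ℕ) :=
  (Fintype.piFinset fun _ => Finset.range (k + 1)).filter fun α => (∑ i, α i) ≤ k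

/-- The Japanese bracket ⟨s⟩ = (1 + s²)^{1/2}. -/
def jb (s : ℝ) : ℝ := Real.sqrt (1 + s ^ 2)

/-- The spacetime point (t, x). -/
def st (t : ℝ) (x : Sp) : Spt := ![t, x 0, x 1]

/-- The null vector (−1, cos θ, sin θ). -/
def nullVec (θ : ℝ) : Fin 3 → ℝ := ![(-1 : ℝ), Real.cos θ, Real.sin θ]

/-- The standard null condition: g^{kij} ω_k ω_i ω_j = 0 for all null ω. -/
def NullCond (g : Fin 3 → Fin 3 → Fin 3 → ℝ) : Prop :=
  ∀ θ : ℝ, ∑ k, ∑ i, ∑ j, g k i j * nullVec θ k * nullVec θ i * nullVec θ j = 0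

/-- The quadratic nonlinearity g^{kij} ∂_k u ∂_{ij} u. -/
def Quad (g : Fin 3 → Fin 3 → Fin 3 → ℝ) (u : Spt → ℝ) : Spt → ℝ :=
  fun y => ∑ k, ∑ i, ∑ j, g k i j * pd k u y * pd i (pd j u) y

/-- The energy E_J(u(t,·)) = Σ_{|α|≤J} ‖(∂Γ^α u)(t,·)‖²_{L²(ℝ²)}. -/
def energy (J : ℕ) (u : Spt → ℝ) (t : ℝ) : ℝ :=
  ∑ α ∈ midx J, ∑ i : Fin 3, ∫ x : Sp, (pd i (GamPow α u) (st t x)) ^ 2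

/-- The L² norm on ℝ². -/
def L2 (f : Sp → ℝ) : ℝ := Real.sqrt (∫ x : Sp, (f x) ^ 2)

/-- The domain (0,∞) × (ℝ² \ {0}) in spacetime. -/
def Udom : Set Spt := {y | 0 < y 0 ∧ rad y ≠ 0}

/-- Helper: |a| ≤ √s when a² ≤ s. -/
lemma abs_le_sqrt_of_sq_le {a s : ℝ} (h : a ^ 2 ≤ s) : |a| ≤ Real.sqrt s := by
  rw [← Real.sqrt_sq_eq_abs]
  exact Real.sqrt_le_sqrt h

lemma udom_open : IsOpen Udom := by
  have h1 : IsOpen {y : Spt | 0 < y 0} :=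
    isOpen_lt continuous_const (continuous_apply 0)
  have h2 : IsOpen {y : Spt | rad y ≠ 0} := by
    have hc : Continuous rad := by
      unfold rad; fun_prop
    exact isOpen_compl_singleton.preimage hc
  exact (h1.inter h2)

/-- Second derivatives commute for C² functions on the open set Udom. -/
lemma pd_comm (h : Spt → ℝ) (hh : ContDiffOn ℝ 2 h Udom) {y : Spt} (hy : y ∈ Udom)
    (i j : Fin 3) : pd i (pd j h) y = pd j (pd i h) y := by
  have hyA : ContDiffAt ℝ 2 h y := hh.contDiffAt (udom_open.mem_nhds hy)
  have hd2 : DifferentiableAt ℝ (fderiv ℝ h) y :=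
    (hyA.fderiv_right (m := 1) (by norm_num)).differentiableAt one_ne_zero
  have hsymm : IsSymmSndFDerivAt ℝ h y := hyA.isSymmSndFDerivAt (by simp [minSmoothness_of_isRCLikeNormedField])
  have key : ∀ a b : Fin 3,
      pd a (pd b h) y = fderiv ℝ (fderiv ℝ h) y (Pi.single a 1) (Pi.single b 1) := by
    intro a b
    show fderiv ℝ (fun z => (fderiv ℝ h z) (Pi.single b 1)) y (Pi.single a 1) = _
    rw [fderiv_clm_apply hd2 (differentiableAt_const _)]
    simp
  rw [key i j, key j i, hsymm (Pi.single i 1) (Pi.single j 1)]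

/-- Helper: triple-sum bound. -/
lemma triple_bound (u gab : Fin 3 → Fin 3 → Fin 3 → ℝ) (B : ℝ)
    (hb : ∀ k i j, |u k i j| ≤ gab k i j * B) :
    |∑ k, ∑ i, ∑ j, u k i j| ≤ (∑ k, ∑ i, ∑ j, gab k i j) * B := by
  calc |∑ k, ∑ i, ∑ j, u k i j| ≤ ∑ k, ∑ i, ∑ j, |u k i j| := by
        refine le_trans (Finset.abs_sum_le_sum_abs _ _) (Finset.sum_le_sum fun k _ => ?_)
        exact le_trans (Finset.abs_sum_le_sum_abs _ _)
          (Finset.sum_le_sum fun i _ => Finset.abs_sum_le_sum_abs _ _)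
    _ ≤ ∑ k, ∑ i, ∑ j, gab k i j * B :=
        Finset.sum_le_sum fun k _ => Finset.sum_le_sum fun i _ =>
          Finset.sum_le_sum fun j _ => hb k i j
    _ = (∑ k, ∑ i, ∑ j, gab k i j) * B := by simp [Finset.sum_mul]

set_option maxHeartbeats 1000000 in
/-- Null form bound: |g^{kij} ∂_k f ∂_{ij} h| ≲ |Tf| |∂²h| + |∂f| |T∂h|. -/
theorem statement5
    (g : Fin 3 → Fin 3 → Fin 3 → ℝ)
    (hsym : ∀ k i j, g k i j = g k j i)
    (hnull : NullCond g) :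
    ∃ C > (0 : ℝ), ∀ f h : Spt → ℝ,
      ContDiffOn ℝ 2 f Udom → ContDiffOn ℝ 2 h Udom →
      ∀ y ∈ Udom,
        |∑ k, ∑ i, ∑ j, g k i j * pd k f y * pd i (pd j h) y| ≤
          C * (Real.sqrt ((Td 1 f y) ^ 2 + (Td 2 f y) ^ 2) *
                Real.sqrt (∑ a : Fin 3, ∑ b : Fin 3, (pd a (pd b h) y) ^ 2)
              + Real.sqrt (∑ a : Fin 3, (pd a f y) ^ 2) *
                Real.sqrt (∑ a : Fin 3,
                  ((Td 1 (pd a h) y) ^ 2 + (Td 2 (pd a h) y) ^ 2))) := by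
  refine ⟨2 * (∑ k, ∑ i, ∑ j, |g k i j|) + 1, by positivity, ?_⟩
  intro f h hf hh y hy
  set G : ℝ := ∑ k, ∑ i, ∑ j, |g k i j| with hGdef
  have hG0 : 0 ≤ G := by positivity
  set TfB : ℝ := Real.sqrt ((Td 1 f y) ^ 2 + (Td 2 f y) ^ 2) with hTfBdef
  set HB : ℝ := Real.sqrt (∑ a : Fin 3, ∑ b : Fin 3, (pd a (pd b h) y) ^ 2) with hHBdef
  set DfB : ℝ := Real.sqrt (∑ a : Fin 3, (pd a f y) ^ 2) with hDfBdef
  set THB : ℝ := Real.sqrt (∑ a : Fin 3,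
      ((Td 1 (pd a h) y) ^ 2 + (Td 2 (pd a h) y) ^ 2)) with hTHBdef
  have hTfB0 : 0 ≤ TfB := Real.sqrt_nonneg _
  have hHB0 : 0 ≤ HB := Real.sqrt_nonneg _
  have hDfB0 : 0 ≤ DfB := Real.sqrt_nonneg _
  have hTHB0 : 0 ≤ THB := Real.sqrt_nonneg _
  -- basic facts about ω
  have hr : 0 < rad y := lt_of_le_of_ne (Real.sqrt_nonneg _) (Ne.symm hy.2)
  have hrsq : rad y ^ 2 = (y 1) ^ 2 + (y 2) ^ 2 := Real.sq_sqrt (by positivity)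
  have hom1 : om 1 y = y 1 / rad y := by simp [om]
  have hom2 : om 2 y = y 2 / rad y := by simp [om]
  have hom0 : om 0 y = -1 := by simp [om]
  have homsq : (om 1 y) ^ 2 + (om 2 y) ^ 2 = 1 := by
    rw [hom1, hom2]
    field_simp
    linarith [hrsq]
  have habs : ∀ i : Fin 3, (y i) ^ 2 ≤ (y 1) ^ 2 + (y 2) ^ 2 → |y i / rad y| ≤ 1 := by
    intro i hi
    rw [abs_div, abs_of_pos hr, div_le_one hr, ← Real.sqrt_sq_eq_abs]
    exact Real.sqrt_le_sqrt hi
  have hombd : ∀ k : Fin 3, |om k y| ≤ 1 := by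
    intro k
    by_cases hk : k = 0
    · subst hk; rw [hom0]; norm_num
    · have hkom : om k y = y k / rad y := by simp [om, hk]
      rw [hkom]
      refine habs k ?_
      rcases k with ⟨kv, hkv⟩
      interval_cases kv
      · exact absurd rfl hk
      · exact le_add_of_nonneg_right (sq_nonneg _)
      · exact le_add_of_nonneg_left (sq_nonneg _)
  -- the null condition at the point y
  have hnullzero : (∑ k, ∑ i, ∑ j, g k i j * om k y * om i y * om j y) = 0 := by
    have hc2 : (om 1 y) ^ 2 ≤ 1 := by nlinarith [sq_nonneg (om 2 y)]
    have hc1 : -1 ≤ om 1 y ∧ om 1 y ≤ 1 := by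
      constructor <;> nlinarith [sq_nonneg (om 1 y + 1), sq_nonneg (om 1 y - 1)]
    set θ : ℝ := if 0 ≤ om 2 y then Real.arccos (om 1 y) else -Real.arccos (om 1 y) with hθ
    have hcos : Real.cos θ = om 1 y := by
      rw [hθ]; split_ifs <;> simp [Real.cos_arccos hc1.1 hc1.2]
    have hsin : Real.sin θ = om 2 y := by
      rw [hθ]; split_ifs with hs
      · rw [Real.sin_arccos]
        rw [show 1 - om 1 y ^ 2 = om 2 y ^ 2 by linarith, Real.sqrt_sq hs]
      · rw [Real.sin_neg, Real.sin_arccos]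
        rw [show 1 - om 1 y ^ 2 = om 2 y ^ 2 by linarith, Real.sqrt_sq_eq_abs,
          abs_of_neg (lt_of_not_ge hs)]
        ring
    have homega : ∀ k : Fin 3, om k y = nullVec θ k := by
      intro k
      fin_cases k
      · show om 0 y = nullVec θ 0
        rw [hom0]; simp [nullVec]
      · show om 1 y = nullVec θ 1
        rw [← hcos]; simp [nullVec]
      · show om 2 y = nullVec θ 2
        rw [← hsin]; simp [nullVec]
    simp only [homega]
    exact hnull θ
  -- decomposition identities
  have hpd : ∀ k : Fin 3, pd k f y = Td k f y - om k y * pd 0 f y := by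
    intro k; simp [Td]
  have hH : ∀ i j : Fin 3, pd i (pd j h) y =
      Td i (pd j h) y - om i y * (Td j (pd 0 h) y - om j y * pd 0 (pd 0 h) y) := by
    intro i j
    have h1 : pd 0 (pd j h) y = pd j (pd 0 h) y := pd_comm h hh hy 0 j
    simp only [Td]
    rw [h1]
    ring
  -- termwise algebraic identity
  have hterm : ∀ k i j : Fin 3,
      g k i j * pd k f y * pd i (pd j h) y =
        g k i j * Td k f y * pd i (pd j h) y
        + (-(g k i j * om k y * pd 0 f y * Td i (pd j h) y))
        + g k i j * om k y * om i y * pd 0 f y * Td j (pd 0 h) y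
        + (-(pd 0 f y * pd 0 (pd 0 h) y)) * (g k i j * om k y * om i y * om j y) := by
    intro k i j
    rw [hpd k, hH i j]
    ring
  have hsplit : (∑ k, ∑ i, ∑ j, g k i j * pd k f y * pd i (pd j h) y) =
      (∑ k, ∑ i, ∑ j, g k i j * Td k f y * pd i (pd j h) y)
      + (∑ k, ∑ i, ∑ j, -(g k i j * om k y * pd 0 f y * Td i (pd j h) y))
      + (∑ k, ∑ i, ∑ j, g k i j * om k y * om i y * pd 0 f y * Td j (pd 0 h) y)
      + (∑ k, ∑ i, ∑ j, (-(pd 0 f y * pd 0 (pd 0 h) y)) *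
          (g k i j * om k y * om i y * om j y)) := by
    rw [Finset.sum_congr rfl fun k _ => Finset.sum_congr rfl fun i _ =>
      Finset.sum_congr rfl fun j _ => hterm k i j]
    simp [Finset.sum_add_distrib]
  have hT4 : (∑ k, ∑ i, ∑ j, (-(pd 0 f y * pd 0 (pd 0 h) y)) *
      (g k i j * om k y * om i y * om j y)) = 0 := by
    simp only [← Finset.mul_sum]
    rw [hnullzero, mul_zero]
  -- pointwise bounds
  have hTf : ∀ k : Fin 3, |Td k f y| ≤ TfB := by
    intro k
    fin_cases k
    · show |Td 0 f y| ≤ TfB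
      have h0 : Td 0 f y = 0 := by simp [Td, om]
      rw [h0, abs_zero]; exact hTfB0
    · show |Td 1 f y| ≤ TfB
      exact abs_le_sqrt_of_sq_le (by nlinarith [sq_nonneg (Td 2 f y)])
    · show |Td 2 f y| ≤ TfB
      exact abs_le_sqrt_of_sq_le (by nlinarith [sq_nonneg (Td 1 f y)])
  have hF0 : |pd 0 f y| ≤ DfB :=
    abs_le_sqrt_of_sq_le (Finset.single_le_sum
      (f := fun a => (pd a f y) ^ 2) (fun a _ => sq_nonneg _) (Finset.mem_univ 0))
  have hHbd : ∀ i j : Fin 3, |pd i (pd j h) y| ≤ HB := by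
    intro i j
    refine abs_le_sqrt_of_sq_le (le_trans ?_ (Finset.single_le_sum
      (f := fun a => ∑ b, (pd a (pd b h) y) ^ 2) (fun a _ => by positivity)
      (Finset.mem_univ i)))
    exact Finset.single_le_sum (f := fun b => (pd i (pd b h) y) ^ 2)
      (fun b _ => sq_nonneg _) (Finset.mem_univ j)
  have hTHbd : ∀ i j : Fin 3, |Td i (pd j h) y| ≤ THB := by
    intro i j
    have hsum : ∀ a : Fin 3,
        (Td 1 (pd a h) y) ^ 2 + (Td 2 (pd a h) y) ^ 2 ≤ ∑ a : Fin 3,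
          ((Td 1 (pd a h) y) ^ 2 + (Td 2 (pd a h) y) ^ 2) :=
      fun a => Finset.single_le_sum
        (f := fun a => (Td 1 (pd a h) y) ^ 2 + (Td 2 (pd a h) y) ^ 2)
        (fun a _ => by positivity) (Finset.mem_univ a)
    fin_cases i
    · show |Td 0 (pd j h) y| ≤ THB
      have h0 : Td 0 (pd j h) y = 0 := by simp [Td, om]
      rw [h0, abs_zero]; exact hTHB0
    · show |Td 1 (pd j h) y| ≤ THB
      exact abs_le_sqrt_of_sq_le (le_trans
        (by nlinarith [sq_nonneg (Td 2 (pd j h) y)]) (hsum j))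
    · show |Td 2 (pd j h) y| ≤ THB
      exact abs_le_sqrt_of_sq_le (le_trans
        (by nlinarith [sq_nonneg (Td 1 (pd j h) y)]) (hsum j))
  -- bounds for the three sums
  have hb1 : |∑ k, ∑ i, ∑ j, g k i j * Td k f y * pd i (pd j h) y| ≤ G * (TfB * HB) := by
    refine triple_bound _ _ _ fun k i j => ?_
    calc |g k i j * Td k f y * pd i (pd j h) y|
        = |g k i j| * (|Td k f y| * |pd i (pd j h) y|) := by
          rw [abs_mul, abs_mul]; ring
      _ ≤ |g k i j| * (TfB * HB) := by
          refine mul_le_mul_of_nonneg_left ?_ (abs_nonneg _)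
          exact mul_le_mul (hTf k) (hHbd i j) (abs_nonneg _) hTfB0
  have hb2 : |∑ k, ∑ i, ∑ j, -(g k i j * om k y * pd 0 f y * Td i (pd j h) y)| ≤
      G * (DfB * THB) := by
    refine triple_bound _ _ _ fun k i j => ?_
    calc |-(g k i j * om k y * pd 0 f y * Td i (pd j h) y)|
        = |g k i j| * (|om k y| * (|pd 0 f y| * |Td i (pd j h) y|)) := by
          rw [abs_neg, abs_mul, abs_mul, abs_mul]; ring
      _ ≤ |g k i j| * (1 * (DfB * THB)) := by
          refine mul_le_mul_of_nonneg_left ?_ (abs_nonneg _)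
          exact mul_le_mul (hombd k)
            (mul_le_mul hF0 (hTHbd i j) (abs_nonneg _) hDfB0)
            (by positivity) one_pos.le
      _ = |g k i j| * (DfB * THB) := by ring
  have hb3 : |∑ k, ∑ i, ∑ j, g k i j * om k y * om i y * pd 0 f y * Td j (pd 0 h) y| ≤
      G * (DfB * THB) := by
    refine triple_bound _ _ _ fun k i j => ?_
    calc |g k i j * om k y * om i y * pd 0 f y * Td j (pd 0 h) y|
        = |g k i j| * (|om k y| * (|om i y| * (|pd 0 f y| * |Td j (pd 0 h) y|))) := by
          rw [abs_mul, abs_mul, abs_mul, abs_mul]; ring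
      _ ≤ |g k i j| * (1 * (1 * (DfB * THB))) := by
          refine mul_le_mul_of_nonneg_left ?_ (abs_nonneg _)
          refine mul_le_mul (hombd k) ?_ (by positivity) one_pos.le
          exact mul_le_mul (hombd i)
            (mul_le_mul hF0 (hTHbd j 0) (abs_nonneg _) hDfB0)
            (by positivity) one_pos.le
      _ = |g k i j| * (DfB * THB) := by ring
  -- conclude
  rw [hsplit, hT4, add_zero]
  have htri : |(∑ k, ∑ i, ∑ j, g k i j * Td k f y * pd i (pd j h) y)
      + (∑ k, ∑ i, ∑ j, -(g k i j * om k y * pd 0 f y * Td i (pd j h) y))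
      + (∑ k, ∑ i, ∑ j, g k i j * om k y * om i y * pd 0 f y * Td j (pd 0 h) y)| ≤
      G * (TfB * HB) + G * (DfB * THB) + G * (DfB * THB) := by
    refine le_trans (abs_add_le _ _) (le_trans (add_le_add (abs_add_le _ _) le_rfl) ?_)
    exact add_le_add (add_le_add hb1 hb2) hb3
  refine le_trans htri ?_
  have h1 : 0 ≤ TfB * HB := by positivity
  have h2 : 0 ≤ DfB * THB := by positivity
  nlinarith [h1, h2, hG0]
end
end

section
/- There is an absolute constant C > 0 such that for every twice continuously differentiable function ũ = ũ(t,x) on [0,∞) × ℝ², every t ≥ 0 and every x ∈ ℝ² \ {0} with r = |x|, one has the pointwise bound ⟨r − t⟩ ( |∂_{tt} ũ(t,x)| + |∂_t ∇ ũ(t,x)| + |Δ ũ(t,x)| ) ≤ C ( |(∂Γ^{≤1} ũ)(t,x)| + (r + t) |(□ũ)(t,x)| ). -/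
open MeasureTheory Real

noncomputable section

lemma pd_contDiff {u : Spt → ℝ} (hu : ContDiff ℝ 2 u) (j : Fin 3) : ContDiff ℝ 1 (pd j u) := by
  unfold pd
  exact (hu.fderiv_right (by norm_num)).clm_apply contDiff_const

lemma pd_eq_snd {u : Spt → ℝ} (hu : ContDiff ℝ 2 u) (i j : Fin 3) (y : Spt) :
    pd i (pd j u) y = fderiv ℝ (fderiv ℝ u) y (Pi.single i 1) (Pi.single j 1) := by
  have hd' : DifferentiableAt ℝ (fderiv ℝ u) y :=
    (((hu.fderiv_right (m := 1) (by norm_num)).differentiable one_ne_zero) y)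
  show fderiv ℝ (fun z => (fderiv ℝ u z) (Pi.single j 1)) y (Pi.single i 1) = _
  rw [fderiv_clm_apply hd' (differentiableAt_const _)]
  simp

lemma schwarz {u : Spt → ℝ} (hu : ContDiff ℝ 2 u) (i j : Fin 3) (y : Spt) :
    pd i (pd j u) y = pd j (pd i u) y := by
  rw [pd_eq_snd hu, pd_eq_snd hu]
  exact second_derivative_symmetric
    (fun z => ((hu.differentiable (by norm_num)) z).hasFDerivAt)
    (((hu.fderiv_right (m := 1) (by norm_num)).differentiable one_ne_zero) y).hasFDerivAt _ _
lemma pd_gam3 {u : Spt → ℝ} (hu : ContDiff ℝ 2 u) (i : Fin 3) (y : Spt) :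
    pd i (Gam 3 u) y =
      ((if (1:Fin 3) = i then 1 else 0) * pd 2 u y + y 1 * pd i (pd 2 u) y)
      - ((if (2:Fin 3) = i then 1 else 0) * pd 1 u y + y 2 * pd i (pd 1 u) y) := by
  have hp : ∀ j : Fin 3, DifferentiableAt ℝ (pd j u) y :=
    fun j => ((pd_contDiff hu j).differentiable one_ne_zero) y
  have h1 : HasFDerivAt (fun z : Spt => z 1) (ContinuousLinearMap.proj 1 : Spt →L[ℝ] ℝ) y :=
    hasFDerivAt_apply 1 y
  have h2 : HasFDerivAt (fun z : Spt => z 2) (ContinuousLinearMap.proj 2 : Spt →L[ℝ] ℝ) y :=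
    hasFDerivAt_apply 2 y
  have H : HasFDerivAt (Gam 3 u)
      ((y 1 • fderiv ℝ (pd 2 u) y + pd 2 u y • (ContinuousLinearMap.proj 1 : Spt →L[ℝ] ℝ))
        - (y 2 • fderiv ℝ (pd 1 u) y + pd 1 u y • (ContinuousLinearMap.proj 2 : Spt →L[ℝ] ℝ))) y :=
    (h1.mul (hp 2).hasFDerivAt).sub (h2.mul (hp 1).hasFDerivAt)
  show fderiv ℝ (Gam 3 u) y (Pi.single i 1) = _
  rw [H.fderiv]
  simp [pd, Pi.single_apply]
  ring

lemma pd_gam4 {u : Spt → ℝ} (hu : ContDiff ℝ 2 u) (i : Fin 3) (y : Spt) :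
    pd i (Gam 4 u) y =
      ((if (0:Fin 3) = i then 1 else 0) * pd 0 u y + y 0 * pd i (pd 0 u) y)
      + ((if (1:Fin 3) = i then 1 else 0) * pd 1 u y + y 1 * pd i (pd 1 u) y)
      + ((if (2:Fin 3) = i then 1 else 0) * pd 2 u y + y 2 * pd i (pd 2 u) y) := by
  have hp : ∀ j : Fin 3, DifferentiableAt ℝ (pd j u) y :=
    fun j => ((pd_contDiff hu j).differentiable one_ne_zero) y
  have h0 : HasFDerivAt (fun z : Spt => z 0) (ContinuousLinearMap.proj 0 : Spt →L[ℝ] ℝ) y :=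
    hasFDerivAt_apply 0 y
  have h1 : HasFDerivAt (fun z : Spt => z 1) (ContinuousLinearMap.proj 1 : Spt →L[ℝ] ℝ) y :=
    hasFDerivAt_apply 1 y
  have h2 : HasFDerivAt (fun z : Spt => z 2) (ContinuousLinearMap.proj 2 : Spt →L[ℝ] ℝ) y :=
    hasFDerivAt_apply 2 y
  have H : HasFDerivAt (Gam 4 u)
      (((y 0 • fderiv ℝ (pd 0 u) y + pd 0 u y • (ContinuousLinearMap.proj 0 : Spt →L[ℝ] ℝ))
        + (y 1 • fderiv ℝ (pd 1 u) y + pd 1 u y • (ContinuousLinearMap.proj 1 : Spt →L[ℝ] ℝ)))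
        + (y 2 • fderiv ℝ (pd 2 u) y + pd 2 u y • (ContinuousLinearMap.proj 2 : Spt →L[ℝ] ℝ))) y :=
    ((h0.mul (hp 0).hasFDerivAt).add (h1.mul (hp 1).hasFDerivAt)).add (h2.mul (hp 2).hasFDerivAt)
  show fderiv ℝ (Gam 4 u) y (Pi.single i 1) = _
  rw [H.fderiv]
  simp [pd, Pi.single_apply]
  ring
lemma abs_le_add6 {x1 x2 x3 x4 x5 x6 m1 m2 m3 m4 m5 m6 : ℝ}
    (h1 : |x1| ≤ m1) (h2 : |x2| ≤ m2) (h3 : |x3| ≤ m3)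
    (h4 : |x4| ≤ m4) (h5 : |x5| ≤ m5) (h6 : |x6| ≤ m6) :
    |x1 + x2 + x3 + x4 + x5 + x6| ≤ m1 + m2 + m3 + m4 + m5 + m6 := by
  calc |x1 + x2 + x3 + x4 + x5 + x6|
      ≤ |x1 + x2 + x3 + x4 + x5| + |x6| := abs_add_le _ _
    _ ≤ (|x1 + x2 + x3 + x4| + |x5|) + |x6| := by gcongr; exact abs_add_le _ _
    _ ≤ ((|x1 + x2 + x3| + |x4|) + |x5|) + |x6| := by gcongr; exact abs_add_le _ _
    _ ≤ (((|x1 + x2| + |x3|) + |x4|) + |x5|) + |x6| := by gcongr; exact abs_add_le _ _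
    _ ≤ ((((|x1| + |x2|) + |x3|) + |x4|) + |x5|) + |x6| := by gcongr; exact abs_add_le _ _
    _ ≤ m1 + m2 + m3 + m4 + m5 + m6 := by linarith

lemma abs_le_add5 {x1 x2 x3 x4 x5 m1 m2 m3 m4 m5 : ℝ}
    (h1 : |x1| ≤ m1) (h2 : |x2| ≤ m2) (h3 : |x3| ≤ m3)
    (h4 : |x4| ≤ m4) (h5 : |x5| ≤ m5) :
    |x1 + x2 + x3 + x4 + x5| ≤ m1 + m2 + m3 + m4 + m5 := by
  calc |x1 + x2 + x3 + x4 + x5|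
      ≤ |x1 + x2 + x3 + x4| + |x5| := abs_add_le _ _
    _ ≤ ((|x1 + x2 + x3| + |x4|)) + |x5| := by gcongr; exact abs_add_le _ _
    _ ≤ (((|x1 + x2| + |x3|) + |x4|)) + |x5| := by gcongr; exact abs_add_le _ _
    _ ≤ ((((|x1| + |x2|) + |x3|) + |x4|)) + |x5| := by gcongr; exact abs_add_le _ _
    _ ≤ m1 + m2 + m3 + m4 + m5 := by linarith

lemma final_alg (S t r a b u0 u1 u2 A B1 B2 u11 u12 u22 G30 G31 G32 G40 G41 G42 q jbv sq2 : ℝ)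
    (ht : 0 ≤ t) (hrpos : 0 < r) (hr2 : r^2 = a^2 + b^2)
    (ha : |a| ≤ r) (hb : |b| ≤ r)
    (e30 : G30 = a * B2 - b * B1)
    (e31 : G31 = u2 + a * u12 - b * u11)
    (e32 : G32 = -u1 + a * u22 - b * u12)
    (e40 : G40 = u0 + t * A + a * B1 + b * B2)
    (e41 : G41 = u1 + t * B1 + a * u11 + b * u12)
    (e42 : G42 = u2 + t * B2 + a * u12 + b * u22)
    (hq : q = A - u11 - u22)
    (bu0 : |u0| ≤ S) (bu1 : |u1| ≤ S) (bu2 : |u2| ≤ S)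
    (bA : |A| ≤ S) (bB1 : |B1| ≤ S) (bB2 : |B2| ≤ S)
    (b11 : |u11| ≤ S) (b12 : |u12| ≤ S) (b22 : |u22| ≤ S)
    (bG30 : |G30| ≤ S) (bG31 : |G31| ≤ S) (bG32 : |G32| ≤ S)
    (bG40 : |G40| ≤ S) (bG41 : |G41| ≤ S) (bG42 : |G42| ≤ S)
    (hjb : jbv ≤ 1 + |r - t|) (hjb0 : 0 ≤ jbv)
    (hsq2 : sq2 ≤ |B1| + |B2|) (hsq20 : 0 ≤ sq2) :
    jbv * (|A| + sq2 + |u11 + u22|) ≤ 40 * (S + (r + t) * |q|) := by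
  have hS0 : 0 ≤ S := le_trans (abs_nonneg _) bA
  have hrt : 0 < r + t := by linarith
  have hq0 : 0 ≤ |q| := abs_nonneg q
  have id0 : (r^2 - t^2) * A =
      r^2*q + a*G41 + b*G42 + a*G32 + (-(b*G31)) + (-(t*(G40 - u0))) := by
    rw [e41, e42, e32, e31, e40, hq, hr2]; ring
  have id1 : (r^2 - t^2) * B1 =
      a*(G40 - u0) + (-(b*G30)) + (-(t*G41)) + (-(t*G32)) + (-(t*(a*q))) := by
    rw [e40, e30, e41, e32, hq, hr2]; ring
  have id2 : (r^2 - t^2) * B2 =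
      b*(G40 - u0) + a*G30 + (-(t*G42)) + t*G31 + (-(t*(b*q))) := by
    rw [e40, e30, e42, e31, hq, hr2]; ring
  have habs : ∀ c g : ℝ, |c| ≤ r → |g| ≤ S → |c * g| ≤ r * S := fun c g hc hg => by
    rw [abs_mul]; exact mul_le_mul hc hg (abs_nonneg _) hrpos.le
  have h40 : |G40 - u0| ≤ 2*S := by
    calc |G40 - u0| ≤ |G40| + |u0| := abs_sub _ _
      _ ≤ 2*S := by linarith
  have i1 := habs _ _ ha bG41
  have i2 := habs _ _ hb bG42
  have i3 := habs _ _ ha bG32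
  have i4 := habs _ _ hb bG31
  have i5 : |t*(G40 - u0)| ≤ t*(2*S) := by
    rw [abs_mul, abs_of_nonneg ht]; exact mul_le_mul_of_nonneg_left h40 ht
  have i6 : |r^2*q| ≤ r^2*|q| := le_of_eq (by rw [abs_mul, abs_of_nonneg (sq_nonneg r)])
  have eabs : ∀ X : ℝ, |(r^2 - t^2)*X| = (r+t) * (|r - t| * |X|) := fun X => by
    rw [show r^2 - t^2 = (r-t)*(r+t) by ring, abs_mul, abs_mul, abs_of_pos hrt]; ring
  -- A bound
  have hX : |(r^2 - t^2)*A| ≤ r^2*|q| + (r*S) + (r*S) + (r*S) + (r*S) + t*(2*S) := by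
    rw [id0]
    exact abs_le_add6 i6 i1 i2 i3 (by rw [abs_neg]; exact i4) (by rw [abs_neg]; exact i5)
  have cA : |r - t| * |A| ≤ 6*S + (r+t)*|q| := by
    rw [eabs] at hX
    have h2 : r^2*|q| + (r*S) + (r*S) + (r*S) + (r*S) + t*(2*S) ≤ (r+t) * (6*S + (r+t)*|q|) := by
      have f1 : 0 ≤ (2*r + 4*t)*S := mul_nonneg (by linarith) hS0
      have f2 : 0 ≤ (2*r*t + t^2)*|q| := mul_nonneg (by have := mul_nonneg hrpos.le ht; have := sq_nonneg t; linarith) hq0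
      linarith [f1, f2]
    exact le_of_mul_le_mul_left (hX.trans h2) hrt
  -- B1 bound
  have j1a : |a*(G40 - u0)| ≤ r*(2*S) := by
    rw [abs_mul]; exact mul_le_mul ha h40 (abs_nonneg _) hrpos.le
  have j1b : |b*(G40 - u0)| ≤ r*(2*S) := by
    rw [abs_mul]; exact mul_le_mul hb h40 (abs_nonneg _) hrpos.le
  have j2 := habs _ _ hb bG30
  have j2' := habs _ _ ha bG30
  have jt : ∀ g : ℝ, |g| ≤ S → |t*g| ≤ t*S := fun g hg => by
    rw [abs_mul, abs_of_nonneg ht]; exact mul_le_mul_of_nonneg_left hg ht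
  have j5 : |t*(a*q)| ≤ t*(r*|q|) := by
    rw [abs_mul, abs_of_nonneg ht]
    refine mul_le_mul_of_nonneg_left ?_ ht
    rw [abs_mul]; exact mul_le_mul ha (le_refl _) (abs_nonneg _) hrpos.le
  have j5' : |t*(b*q)| ≤ t*(r*|q|) := by
    rw [abs_mul, abs_of_nonneg ht]
    refine mul_le_mul_of_nonneg_left ?_ ht
    rw [abs_mul]; exact mul_le_mul hb (le_refl _) (abs_nonneg _) hrpos.le
  have hcomp : r*(2*S) + (r*S) + (t*S) + (t*S) + t*(r*|q|) ≤ (r+t) * (6*S + (r+t)*|q|) := by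
    have f1 : 0 ≤ (3*r + 4*t)*S := mul_nonneg (by linarith) hS0
    have f2 : 0 ≤ (r^2 + r*t + t^2)*|q| := mul_nonneg (by have := mul_nonneg hrpos.le ht; have := sq_nonneg t; have := sq_nonneg r; linarith) hq0
    linarith [f1, f2]
  have cB1 : |r - t| * |B1| ≤ 6*S + (r+t)*|q| := by
    have hX1 : |(r^2 - t^2)*B1| ≤ r*(2*S) + (r*S) + (t*S) + (t*S) + t*(r*|q|) := by
      rw [id1]
      exact abs_le_add5 j1a (by rw [abs_neg]; exact j2) (by rw [abs_neg]; exact jt _ bG41)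
        (by rw [abs_neg]; exact jt _ bG32) (by rw [abs_neg]; exact j5)
    rw [eabs] at hX1
    exact le_of_mul_le_mul_left (hX1.trans hcomp) hrt
  have cB2 : |r - t| * |B2| ≤ 6*S + (r+t)*|q| := by
    have hX2 : |(r^2 - t^2)*B2| ≤ r*(2*S) + (r*S) + (t*S) + (t*S) + t*(r*|q|) := by
      rw [id2]
      exact abs_le_add5 j1b j2' (by rw [abs_neg]; exact jt _ bG42) (jt _ bG31)
        (by rw [abs_neg]; exact j5')
    rw [eabs] at hX2
    exact le_of_mul_le_mul_left (hX2.trans hcomp) hrt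
  -- D bound
  have hrtabs : |r - t| ≤ r + t := by
    apply abs_le.mpr; constructor <;> linarith
  have bD : |u11 + u22| ≤ 2*S := by
    calc |u11 + u22| ≤ |u11| + |u22| := abs_add_le _ _
      _ ≤ 2*S := by linarith
  have cD : |r - t| * |u11 + u22| ≤ 6*S + 2*((r+t)*|q|) := by
    have h1 : |u11 + u22| ≤ |A| + |q| := by
      rw [show u11 + u22 = A - q by rw [hq]; ring]
      exact abs_sub _ _
    have h2 : |r - t| * |u11 + u22| ≤ |r - t| * (|A| + |q|) :=
      mul_le_mul_of_nonneg_left h1 (abs_nonneg _)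
    have h3 : |r - t| * |q| ≤ (r+t) * |q| := mul_le_mul_of_nonneg_right hrtabs hq0
    have h4 : |r - t| * (|A| + |q|) = |r - t| * |A| + |r - t| * |q| := by ring
    linarith [cA]
  -- combine
  have hN : 0 ≤ (r+t)*|q| := mul_nonneg hrt.le hq0
  have step1 : jbv * (|A| + sq2 + |u11 + u22|) ≤ (1 + |r - t|) * (|A| + |B1| + |B2| + |u11 + u22|) := by
    apply mul_le_mul hjb (by linarith) ?_ ?_
    · have := abs_nonneg A; have := abs_nonneg (u11 + u22); linarith
    · have := abs_nonneg (r - t); linarith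
  have ex : (1 + |r - t|) * (|A| + |B1| + |B2| + |u11 + u22|)
      = (|A| + |B1| + |B2| + |u11 + u22|)
        + (|r - t| * |A| + |r - t| * |B1| + |r - t| * |B2| + |r - t| * |u11 + u22|) := by ring
  have step2 : (1 + |r - t|) * (|A| + |B1| + |B2| + |u11 + u22|) ≤ 40 * (S + (r + t) * |q|) := by
    rw [ex]; linarith [cA, cB1, cB2, cD, bA, bB1, bB2, bD, hN]
  linarith

lemma mem_midx_one (v : Fin 5 → ℕ) (h : ∀ i, v i < 2)
    (hs : v 0 + v 1 + v 2 + v 3 + v 4 ≤ 1) : v ∈ midx 1 := by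
  refine Finset.mem_filter.mpr ⟨Fintype.mem_piFinset.mpr fun i => Finset.mem_range.mpr (h i), ?_⟩
  rw [Fin.sum_univ_five]; exact hs

lemma key_bound (u : Spt → ℝ) (t : ℝ) (x : Sp) (α : Fin 5 → ℕ) (hα : α ∈ midx 1) (i : Fin 3) :
    |pd i (GamPow α u) (st t x)| ≤
      Real.sqrt (∑ α ∈ midx 1, ∑ i : Fin 3, (pd i (GamPow α u) (st t x)) ^ 2) := by
  have h1 : (pd i (GamPow α u) (st t x))^2 ≤ ∑ j : Fin 3, (pd j (GamPow α u) (st t x))^2 :=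
    Finset.single_le_sum (f := fun j : Fin 3 => (pd j (GamPow α u) (st t x))^2)
      (fun _ _ => sq_nonneg _) (Finset.mem_univ i)
  have h2 : (∑ j : Fin 3, (pd j (GamPow α u) (st t x))^2)
      ≤ ∑ β ∈ midx 1, ∑ j : Fin 3, (pd j (GamPow β u) (st t x))^2 :=
    Finset.single_le_sum (f := fun β => ∑ j : Fin 3, (pd j (GamPow β u) (st t x))^2)
      (fun β _ => Finset.sum_nonneg fun _ _ => sq_nonneg _) hα
  calc |pd i (GamPow α u) (st t x)| = Real.sqrt ((pd i (GamPow α u) (st t x))^2) :=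
        (Real.sqrt_sq_eq_abs _).symm
    _ ≤ _ := Real.sqrt_le_sqrt (h1.trans h2)

lemma jb_le (s : ℝ) : jb s ≤ 1 + |s| := by
  rw [jb]
  calc Real.sqrt (1 + s^2) ≤ Real.sqrt ((1 + |s|)^2) :=
        Real.sqrt_le_sqrt (by nlinarith [abs_nonneg s, sq_abs s])
    _ = 1 + |s| := Real.sqrt_sq (by positivity)

lemma sqrt_sq_add_sq_le (p q : ℝ) : Real.sqrt (p^2 + q^2) ≤ |p| + |q| := by
  calc Real.sqrt (p^2 + q^2) ≤ Real.sqrt ((|p| + |q|)^2) :=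
        Real.sqrt_le_sqrt (by nlinarith [abs_nonneg p, abs_nonneg q, sq_abs p, sq_abs q, mul_nonneg (abs_nonneg p) (abs_nonneg q)])
    _ = |p| + |q| := Real.sqrt_sq (by positivity)

example (t : ℝ) (x : Sp) : st t x 0 = t := rfl
example (t : ℝ) (x : Sp) : st t x 1 = x 0 := rfl
example (t : ℝ) (x : Sp) : st t x 2 = x 1 := rfl

/-- Klainerman–Sideris type estimate:
⟨r−t⟩ (|∂_tt ũ| + |∂_t∇ũ| + |Δũ|) ≲ |∂Γ^{≤1}ũ| + (r+t)|□ũ|. -/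
theorem statement8 :
    ∃ C > (0 : ℝ), ∀ u : Spt → ℝ, ContDiff ℝ 2 u →
      ∀ t : ℝ, 0 ≤ t → ∀ x : Sp, x ≠ 0 →
        jb (nrm2 x - t) *
          (|pd 0 (pd 0 u) (st t x)| +
            Real.sqrt ((pd 0 (pd 1 u) (st t x)) ^ 2 + (pd 0 (pd 2 u) (st t x)) ^ 2) +
            |pd 1 (pd 1 u) (st t x) + pd 2 (pd 2 u) (st t x)|) ≤
        C * (Real.sqrt (∑ α ∈ midx 1, ∑ i : Fin 3, (pd i (GamPow α u) (st t x)) ^ 2)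
              + (nrm2 x + t) * |Box u (st t x)|) := by
  refine ⟨40, by norm_num, ?_⟩
  intro u hu t ht x hx
  -- memberships
  have m0 : (![0,0,0,0,0] : Fin 5 → ℕ) ∈ midx 1 := mem_midx_one _ (by decide) (by decide)
  have m1 : (![1,0,0,0,0] : Fin 5 → ℕ) ∈ midx 1 := mem_midx_one _ (by decide) (by decide)
  have m2 : (![0,1,0,0,0] : Fin 5 → ℕ) ∈ midx 1 := mem_midx_one _ (by decide) (by decide)
  have m3 : (![0,0,1,0,0] : Fin 5 → ℕ) ∈ midx 1 := mem_midx_one _ (by decide) (by decide)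
  have m4 : (![0,0,0,1,0] : Fin 5 → ℕ) ∈ midx 1 := mem_midx_one _ (by decide) (by decide)
  have m5 : (![0,0,0,0,1] : Fin 5 → ℕ) ∈ midx 1 := mem_midx_one _ (by decide) (by decide)
  -- pointwise bounds by S
  have bu : ∀ i : Fin 3, |pd i u (st t x)| ≤
      Real.sqrt (∑ α ∈ midx 1, ∑ i : Fin 3, (pd i (GamPow α u) (st t x)) ^ 2) :=
    fun i => key_bound u t x _ m0 i
  have bp0 : ∀ i : Fin 3, |pd i (pd 0 u) (st t x)| ≤
      Real.sqrt (∑ α ∈ midx 1, ∑ i : Fin 3, (pd i (GamPow α u) (st t x)) ^ 2) :=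
    fun i => key_bound u t x _ m1 i
  have bp1 : ∀ i : Fin 3, |pd i (pd 1 u) (st t x)| ≤
      Real.sqrt (∑ α ∈ midx 1, ∑ i : Fin 3, (pd i (GamPow α u) (st t x)) ^ 2) :=
    fun i => key_bound u t x _ m2 i
  have bp2 : ∀ i : Fin 3, |pd i (pd 2 u) (st t x)| ≤
      Real.sqrt (∑ α ∈ midx 1, ∑ i : Fin 3, (pd i (GamPow α u) (st t x)) ^ 2) :=
    fun i => key_bound u t x _ m3 i
  have bg3 : ∀ i : Fin 3, |pd i (Gam 3 u) (st t x)| ≤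
      Real.sqrt (∑ α ∈ midx 1, ∑ i : Fin 3, (pd i (GamPow α u) (st t x)) ^ 2) :=
    fun i => key_bound u t x _ m4 i
  have bg4 : ∀ i : Fin 3, |pd i (Gam 4 u) (st t x)| ≤
      Real.sqrt (∑ α ∈ midx 1, ∑ i : Fin 3, (pd i (GamPow α u) (st t x)) ^ 2) :=
    fun i => key_bound u t x _ m5 i
  -- coordinates of st t x
  have hy0 : st t x 0 = t := rfl
  have hy1 : st t x 1 = x 0 := rfl
  have hy2 : st t x 2 = x 1 := rfl
  -- radial quantities
  have hane : 0 < (x 0)^2 + (x 1)^2 := by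
    rcases Function.ne_iff.mp hx with ⟨i, hi⟩
    simp only [Pi.zero_apply] at hi
    fin_cases i
    · have hi' : x 0 ≠ 0 := hi
      nlinarith [mul_self_pos.mpr hi', sq_nonneg (x 1)]
    · have hi' : x 1 ≠ 0 := hi
      nlinarith [mul_self_pos.mpr hi', sq_nonneg (x 0)]
  have hr2 : (nrm2 x)^2 = (x 0)^2 + (x 1)^2 := Real.sq_sqrt hane.le
  have hrpos : 0 < nrm2 x := Real.sqrt_pos.mpr hane
  have ha : |x 0| ≤ nrm2 x := by
    rw [← Real.sqrt_sq_eq_abs]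
    exact Real.sqrt_le_sqrt (by nlinarith [sq_nonneg (x 1)])
  have hb : |x 1| ≤ nrm2 x := by
    rw [← Real.sqrt_sq_eq_abs]
    exact Real.sqrt_le_sqrt (by nlinarith [sq_nonneg (x 0)])
  -- expansions of Gamma derivatives
  have e30 : pd 0 (Gam 3 u) (st t x)
      = x 0 * pd 0 (pd 2 u) (st t x) - x 1 * pd 0 (pd 1 u) (st t x) := by
    rw [pd_gam3 hu 0, hy1, hy2,
      if_neg (show ¬(1:Fin 3) = 0 by decide), if_neg (show ¬(2:Fin 3) = 0 by decide)]
    ring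
  have e31 : pd 1 (Gam 3 u) (st t x)
      = pd 2 u (st t x) + x 0 * pd 1 (pd 2 u) (st t x) - x 1 * pd 1 (pd 1 u) (st t x) := by
    rw [pd_gam3 hu 1, hy1, hy2, if_pos rfl, if_neg (show ¬(2:Fin 3) = 1 by decide)]
    ring
  have e32 : pd 2 (Gam 3 u) (st t x)
      = -pd 1 u (st t x) + x 0 * pd 2 (pd 2 u) (st t x) - x 1 * pd 1 (pd 2 u) (st t x) := by
    rw [pd_gam3 hu 2, hy1, hy2, if_neg (show ¬(1:Fin 3) = 2 by decide), if_pos rfl,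
      schwarz hu 2 1]
    ring
  have e40 : pd 0 (Gam 4 u) (st t x)
      = pd 0 u (st t x) + t * pd 0 (pd 0 u) (st t x) + x 0 * pd 0 (pd 1 u) (st t x)
        + x 1 * pd 0 (pd 2 u) (st t x) := by
    rw [pd_gam4 hu 0, hy0, hy1, hy2, if_pos rfl,
      if_neg (show ¬(1:Fin 3) = 0 by decide), if_neg (show ¬(2:Fin 3) = 0 by decide)]
    ring
  have e41 : pd 1 (Gam 4 u) (st t x)
      = pd 1 u (st t x) + t * pd 0 (pd 1 u) (st t x) + x 0 * pd 1 (pd 1 u) (st t x)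
        + x 1 * pd 1 (pd 2 u) (st t x) := by
    rw [pd_gam4 hu 1, hy0, hy1, hy2, if_neg (show ¬(0:Fin 3) = 1 by decide), if_pos rfl,
      if_neg (show ¬(2:Fin 3) = 1 by decide), schwarz hu 1 0]
    ring
  have e42 : pd 2 (Gam 4 u) (st t x)
      = pd 2 u (st t x) + t * pd 0 (pd 2 u) (st t x) + x 0 * pd 1 (pd 2 u) (st t x)
        + x 1 * pd 2 (pd 2 u) (st t x) := by
    rw [pd_gam4 hu 2, hy0, hy1, hy2, if_neg (show ¬(0:Fin 3) = 2 by decide),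
      if_neg (show ¬(1:Fin 3) = 2 by decide), if_pos rfl, schwarz hu 2 0, schwarz hu 2 1]
    ring
  have hq : Box u (st t x) = pd 0 (pd 0 u) (st t x) - pd 1 (pd 1 u) (st t x)
      - pd 2 (pd 2 u) (st t x) := rfl
  exact final_alg _ t (nrm2 x) (x 0) (x 1) _ _ _ _ _ _ _ _ _ _ _ _ _ _ _ _ _ _
    ht hrpos hr2 ha hb e30 e31 e32 e40 e41 e42 hq
    (bu 0) (bu 1) (bu 2) (bp0 0) (bp1 0) (bp2 0) (bp1 1) (bp2 1) (bp2 2)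
    (bg3 0) (bg3 1) (bg3 2) (bg4 0) (bg4 1) (bg4 2)
    (jb_le _) (Real.sqrt_nonneg _)
    (sqrt_sq_add_sq_le _ _) (Real.sqrt_nonneg _)
end
end
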